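/- Let M = (S,R,V) be a model and [M] = ([S],[R],[V]) its ∘-bisimulation contraction. Then for every s ∈ S, ([M],[s]) and (M,s) are ∘-bisimilar. -/

import Mathlib

/-- A Kripke model. -/
structure Model (W : Type) where
  R : W → W → Prop
  V : ℕ → W → Prop

/-- Z is a ∘-bisimulation on the model M: Z is nonempty and whenever sZs',
(Inv), (∘-Forth) and (∘-Back) hold. -/
def isCircBisim {W : Type} (M : Model W) (Z : W → W → Prop) : Prop :=
  (∃ a b, Z a b) ∧
  ∀ s s', Z s s' →
    ((∀ p, M.V p s ↔ M.V p s') ∧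
     (∀ t, M.R s t → ¬ Z s t → ∃ t', M.R s' t' ∧ Z t t') ∧
     (∀ t', M.R s' t' → ¬ Z s' t' → ∃ t, M.R s t ∧ Z t t'))

/-- The disjoint union of two models. -/
def dsum {W W' : Type} (M : Model W) (M' : Model W') : Model (W ⊕ W') where
  R x y :=
    match x, y with
    | Sum.inl a, Sum.inl b => M.R a b
    | Sum.inr a, Sum.inr b => M'.R a b
    | _, _ => False
  V p x :=
    match x with
    | Sum.inl a => M.V p a
    | Sum.inr a => M'.V p a

/-- (M,s) and (M',s') are ∘-bisimilar: some ∘-bisimulation on the disjoint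
union of M and M' relates s to s'. -/
def circBisimilar {W W' : Type} (M : Model W) (s : W) (M' : Model W') (s' : W') : Prop :=
  ∃ Z, isCircBisim (dsum M M') Z ∧ Z (Sum.inl s) (Sum.inr s')
/-- ∘-bisimilarity between two worlds of the same model M. -/
def eqw {W : Type} (M : Model W) (s t : W) : Prop := circBisimilar M s M t

/-- The ∘-bisimilarity class [s] = {t | s ≃∘ t}. -/
def cls {W : Type} (M : Model W) (s : W) : Set W := {t | eqw M s t}

/-- The worlds of the ∘-bisimulation contraction: the ∘-bisimilarity classes. -/
def ContrW {W : Type} (M : Model W) : Type := {A : Set W // ∃ s, A = cls M s}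

/-- The ∘-bisimulation contraction [M] = ([S],[R],[V]) of M:
[s][R][t] iff s'Rt' for some s' ∈ [s], t' ∈ [t]; [V](p) = {[s] | s ∈ V(p)}. -/
def contraction {W : Type} (M : Model W) : Model (ContrW M) where
  R A B := ∃ a ∈ A.1, ∃ b ∈ B.1, M.R a b
  V p A := ∃ s, M.V p s ∧ A.1 = cls M s

/-!
The quotient map `s ↦ [s]` is a bounded morphism in the ∘-sense: it preserves valuation
and steps, and it lifts every step of `[M]` that leaves the class of its source. The kernel
of such a map on the disjoint union of its source and target is a ∘-bisimulation, and it
relates `[s]` to `s`.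

Making sense of the quotient requires `≃∘` to be an equivalence. Transitivity is the
delicate part, since ∘-bisimulations are not closed under composition; instead, the
transitive closure of a symmetric ∘-bisimulation is again one, so the largest
∘-bisimulation is closed under it.
-/

open Relation

variable {W W' X : Type}

section CircBisim

variable {N : Model W} {Z : W → W → Prop} {x y u : W}

theorem isCircBisim.V_iff (hZ : isCircBisim N Z) (hxy : Z x y) (p : ℕ) :
    N.V p x ↔ N.V p y :=
  (hZ.2 x y hxy).1 p

theorem isCircBisim.exists_forth (hZ : isCircBisim N Z) (hxy : Z x y) (hxu : N.R x u)
    (hnu : ¬ Z x u) : ∃ v, N.R y v ∧ Z u v :=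
  (hZ.2 x y hxy).2.1 u hxu hnu

theorem isCircBisim.exists_back (hZ : isCircBisim N Z) (hxy : Z x y) (hyu : N.R y u)
    (hnu : ¬ Z y u) : ∃ v, N.R x v ∧ Z v u :=
  (hZ.2 x y hxy).2.2 u hyu hnu

theorem isCircBisim_of_symm [Std.Symm Z] (hne : ∃ a b, Z a b)
    (hV : ∀ x y, Z x y → ∀ p, N.V p x ↔ N.V p y)
    (hforth : ∀ x y, Z x y → ∀ u, N.R x u → ¬ Z x u → ∃ v, N.R y v ∧ Z u v) :
    isCircBisim N Z := by
  refine ⟨hne, fun x y hxy => ⟨hV x y hxy, hforth x y hxy, fun v hyv hnv => ?_⟩⟩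
  obtain ⟨u, hxu, hvu⟩ := hforth y x (symm hxy) v hyv hnv
  exact ⟨u, hxu, symm hvu⟩

theorem isCircBisim.symmGen (hZ : isCircBisim N Z) : isCircBisim N (SymmGen Z) := by
  obtain ⟨a, b, hab⟩ := hZ.1
  refine isCircBisim_of_symm ⟨a, b, .of_rel hab⟩ ?_ ?_
  · rintro x y (hxy | hyx) p
    exacts [hZ.V_iff hxy p, (hZ.V_iff hyx p).symm]
  · rintro x y (hxy | hyx) u hxu hnu
    · obtain ⟨v, hyv, huv⟩ := hZ.exists_forth hxy hxu (fun h => hnu (.of_rel h))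
      exact ⟨v, hyv, .of_rel huv⟩
    · obtain ⟨v, hyv, hvu⟩ := hZ.exists_back hyx hxu (fun h => hnu (.of_rel h))
      exact ⟨v, hyv, .of_rel_symm hvu⟩

theorem isCircBisim.transGen_forth [Std.Symm Z] (hZ : isCircBisim N Z) {z : W}
    (h : TransGen Z x z) :
    ∀ u, N.R x u → ¬ TransGen Z x u → ∃ v, N.R z v ∧ TransGen Z u v := by
  induction h using TransGen.head_induction_on with
  | single hxz =>
    intro u hxu hnu
    obtain ⟨v, hzv, huv⟩ := hZ.exists_forth hxz hxu (fun h => hnu (.single h))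
    exact ⟨v, hzv, .single huv⟩
  | @head x y hxy _ ih =>
    intro u hxu hnu
    obtain ⟨w, hyw, huw⟩ := hZ.exists_forth hxy hxu (fun h => hnu (.single h))
    by_cases hyw' : TransGen Z y w
    · exact absurd (.head hxy (hyw'.tail (symm huw))) hnu
    · obtain ⟨v, hzv, hwv⟩ := ih w hyw hyw'
      exact ⟨v, hzv, .head huw hwv⟩

theorem isCircBisim.transGen [Std.Symm Z] (hZ : isCircBisim N Z) :
    isCircBisim N (TransGen Z) := by
  obtain ⟨a, b, hab⟩ := hZ.1
  refine isCircBisim_of_symm ⟨a, b, .single hab⟩ (fun x y h p => ?_)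
    (fun _ _ => hZ.transGen_forth)
  induction h with
  | single h => exact hZ.V_iff h p
  | tail _ h ih => exact ih.trans (hZ.V_iff h p)

end CircBisim

def maxCircBisim (N : Model W) (x y : W) : Prop := ∃ Z, isCircBisim N Z ∧ Z x y

section MaxCircBisim

variable {N : Model W} {Z : W → W → Prop} {x y z u : W}

theorem isCircBisim.le_maxCircBisim (hZ : isCircBisim N Z) : Z ≤ maxCircBisim N :=
  fun _ _ h => ⟨Z, hZ, h⟩

theorem maxCircBisim.V_iff (h : maxCircBisim N x y) (p : ℕ) : N.V p x ↔ N.V p y := by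
  obtain ⟨Z, hZ, hxy⟩ := h
  exact hZ.V_iff hxy p

theorem maxCircBisim.exists_forth (h : maxCircBisim N x y) (hxu : N.R x u)
    (hnu : ¬ maxCircBisim N x u) : ∃ v, N.R y v ∧ maxCircBisim N u v := by
  obtain ⟨Z, hZ, hxy⟩ := h
  obtain ⟨v, hyv, huv⟩ := hZ.exists_forth hxy hxu (fun h => hnu (hZ.le_maxCircBisim _ _ h))
  exact ⟨v, hyv, hZ.le_maxCircBisim _ _ huv⟩

instance : Std.Symm (maxCircBisim N) where
  symm _ _ := fun ⟨_, hZ, hxy⟩ => hZ.symmGen.le_maxCircBisim _ _ (.of_rel_symm hxy)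

theorem isCircBisim_maxCircBisim (hxy : maxCircBisim N x y) :
    isCircBisim N (maxCircBisim N) :=
  isCircBisim_of_symm ⟨x, y, hxy⟩ (fun _ _ h => h.V_iff) (fun _ _ h _ => h.exists_forth)

theorem maxCircBisim.trans (hxy : maxCircBisim N x y) (hyz : maxCircBisim N y z) :
    maxCircBisim N x z :=
  (isCircBisim_maxCircBisim hxy).transGen.le_maxCircBisim _ _ (.tail (.single hxy) hyz)

end MaxCircBisim

/-- A bounded morphism for ∘-bisimulation: as in the ∘-clauses, the back condition is waived
for steps that stay inside a fibre of `f`. -/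
structure IsCircBoundedMorphism (N : Model W) (N' : Model W') (f : W → W') : Prop where
  V_iff : ∀ p x, N'.V p (f x) ↔ N.V p x
  map_R : ∀ {x y}, N.R x y → N'.R (f x) (f y)
  exists_R : ∀ {x b}, N'.R (f x) b → f x ≠ b → ∃ y, N.R x y ∧ f y = b

namespace IsCircBoundedMorphism

variable {N : Model W} {N' : Model W'} {M : Model X} {f : W → W'} {g : X → W'}

protected theorem id : IsCircBoundedMorphism N N id where
  V_iff _ _ := Iff.rfl
  map_R h := h
  exists_R {_ b} hxb _ := ⟨b, hxb, rfl⟩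

theorem sumElim (hf : IsCircBoundedMorphism N N' f) (hg : IsCircBoundedMorphism M N' g) :
    IsCircBoundedMorphism (dsum N M) N' (Sum.elim f g) where
  V_iff p := by
    rintro (x | x)
    exacts [hf.V_iff p x, hg.V_iff p x]
  map_R := by
    rintro (x | x) (y | y) h
    exacts [hf.map_R h, h.elim, h.elim, hg.map_R h]
  exists_R := by
    rintro (x | x) b hxb hne
    · obtain ⟨y, hxy, rfl⟩ := hf.exists_R hxb hne
      exact ⟨.inl y, hxy, rfl⟩
    · obtain ⟨y, hxy, rfl⟩ := hg.exists_R hxb hne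
      exact ⟨.inr y, hxy, rfl⟩

theorem maxCircBisim_of_eq (hf : IsCircBoundedMorphism N N' f) {x y : W} (hxy : f x = f y) :
    maxCircBisim N x y := by
  have : Std.Symm (fun x y => f x = f y) := ⟨fun _ _ h => h.symm⟩
  refine isCircBisim.le_maxCircBisim
    (isCircBisim_of_symm (Z := fun x y => f x = f y) ⟨x, y, hxy⟩ ?_ ?_) _ _ hxy
  · intro x y h p
    rw [← hf.V_iff p x, ← hf.V_iff p y, h]
  · intro x y h u hxu hnu
    obtain ⟨v, hyv, hvu⟩ := hf.exists_R (h ▸ hf.map_R hxu) (h ▸ hnu)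
    exact ⟨v, hyv, hvu.symm⟩

end IsCircBoundedMorphism

theorem maxCircBisim_equivalence (N : Model W) : Equivalence (maxCircBisim N) :=
  ⟨fun _ => IsCircBoundedMorphism.id.maxCircBisim_of_eq rfl, symm, maxCircBisim.trans⟩

theorem circBisimilar_of_isCircBoundedMorphism {M : Model W} {N : Model W'} {f : W → W'}
    (hf : IsCircBoundedMorphism M N f) (s : W) : circBisimilar N (f s) M s :=
  (IsCircBoundedMorphism.id.sumElim hf).maxCircBisim_of_eq rfl

section Eqw

variable {M : Model W} {a b c : W}

theorem maxCircBisim_dsum_self_iff {x y : W ⊕ W} :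
    maxCircBisim (dsum M M) x y ↔ eqw M (x.elim id id) (y.elim id id) := by
  have hfold := (IsCircBoundedMorphism.id (N := M)).sumElim .id
  have hx : maxCircBisim (dsum M M) x (.inl (x.elim id id)) := hfold.maxCircBisim_of_eq rfl
  have hy : maxCircBisim (dsum M M) y (.inr (y.elim id id)) := hfold.maxCircBisim_of_eq rfl
  exact ⟨fun h => ((symm hx).trans h).trans hy, fun h => (hx.trans h).trans (symm hy)⟩

theorem eqw_equivalence : Equivalence (eqw M) := by
  have : eqw M = fun a b => maxCircBisim (dsum M M) (.inl a) (.inl b) := by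
    ext a b
    exact (maxCircBisim_dsum_self_iff (x := .inl a) (y := .inl b)).symm
  rw [this]
  exact (maxCircBisim_equivalence _).comap _

theorem eqw.V_iff (h : eqw M a b) (p : ℕ) : M.V p a ↔ M.V p b :=
  maxCircBisim.V_iff h p

theorem eqw.exists_forth (h : eqw M a c) (hab : M.R a b) (hnab : ¬ eqw M a b) :
    ∃ d, M.R c d ∧ eqw M b d := by
  have hab' : (dsum M M).R (.inl a) (.inl b) := hab
  obtain ⟨v | d, hcv, hbv⟩ :=
    maxCircBisim.exists_forth h hab' (by rwa [maxCircBisim_dsum_self_iff])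
  exacts [hcv.elim, ⟨d, hcv, hbv⟩]

end Eqw

section Contraction

variable {M : Model W} {a b : W}

def toContr (M : Model W) (s : W) : ContrW M := ⟨cls M s, s, rfl⟩

theorem toContr_eq_toContr_iff : toContr M a = toContr M b ↔ eqw M a b := by
  have E := eqw_equivalence (M := M)
  refine ⟨fun h => ?_, fun h => Subtype.ext (Set.ext fun t => ?_)⟩
  · have hb : b ∈ (toContr M b).1 := E.refl b
    rwa [← h] at hb
  · exact ⟨E.trans (E.symm h), E.trans h⟩

theorem isCircBoundedMorphism_toContr :
    IsCircBoundedMorphism M (contraction M) (toContr M) where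
  V_iff p x :=
    ⟨fun ⟨_, hs, hxs⟩ => ((toContr_eq_toContr_iff.mp (Subtype.ext hxs)).V_iff p).mpr hs,
      fun hx => ⟨x, hx, rfl⟩⟩
  map_R {x y} hxy := ⟨x, eqw_equivalence.refl x, y, eqw_equivalence.refl y, hxy⟩
  exists_R := by
    have E := eqw_equivalence (M := M)
    rintro x ⟨_, u, rfl⟩ ⟨a, hxa, b, hub, hab⟩ hne
    change toContr M x ≠ toContr M u at hne
    rw [Ne, toContr_eq_toContr_iff] at hne
    have hnab : ¬ eqw M a b := fun h => hne (E.trans hxa (E.trans h (E.symm hub)))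
    obtain ⟨y, hxy, hby⟩ := (E.symm hxa).exists_forth hab hnab
    exact ⟨y, hxy, toContr_eq_toContr_iff.mpr (E.symm (E.trans hub hby))⟩

end Contraction

theorem stmt15 (W : Type) (M : Model W) (s : W) :
    circBisimilar (contraction M) ⟨cls M s, s, rfl⟩ M s :=
  circBisimilar_of_isCircBoundedMorphism isCircBoundedMorphism_toContr s
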